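/- arXiv:1902.10961 — 4 statements merged into one kernel-verified Lean document; each statement's English description precedes it below -/
import Mathlib

section
/- Let A be an n×n complex matrix and s ∈ ℂ be such that every eigenvalue λ of A satisfies Re λ < Re s. Then the function t ↦ e^{-st} · exp(tA) is integrable on [0,∞), the matrix sI - A is invertible, and ∫₀^∞ e^{-st} exp(tA) dt = (sI - A)^{-1}. -/
/-!
Put `B = A - s • 1`, so that the integrand is `exp (t • B)` and the spectrum of `B` lies in the
open left half-plane. On a generalized eigenvector `v` of `B` for `μ`, the exponential series
terminates after the shift by `μ`: `exp (t • B) v = e^{μ t} ∑_{i<k} t^i / i! (B - μ)^i v`. These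
vectors span, so `‖exp (t • B)‖ = O(e^{ω t})` for some `ω < 0`. Hence `exp (t • B)` is integrable
on `(0, ∞)` and tends to `0`, and integrating `d/dt exp (t • B) = B * exp (t • B)` gives
`B * ∫₀^∞ exp (t • B) dt = -1`.
-/

open MeasureTheory Matrix Set

attribute [local instance] Matrix.linftyOpNormedAddCommGroup Matrix.linftyOpNormedRing
  Matrix.linftyOpNormedAlgebra

open Filter Asymptotics Topology
open scoped Nat

section BanachAlgebra

variable {R : Type*} [NormedRing R] [CompleteSpace R]

theorem exp_add_smul_one [NormedAlgebra ℂ R] (a : R) (c : ℂ) :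
    NormedSpace.exp (a + c • 1) = Complex.exp c • NormedSpace.exp a := by
  let _ : NormedAlgebra ℚ R := NormedAlgebra.restrictScalars ℚ ℂ R
  rw [NormedSpace.exp_add_of_commute ((Commute.one_right a).smul_right c),
    ← Algebra.algebraMap_eq_smul_one, ← NormedSpace.algebraMap_exp_comm, Complex.exp_eq_exp_ℂ,
    Algebra.algebraMap_eq_smul_one, mul_smul_comm, mul_one]

section RealAlgebra

variable [NormedAlgebra ℝ R]

theorem continuous_exp_smul (a : R) : Continuous fun t : ℝ => NormedSpace.exp (t • a) :=
  continuous_iff_continuousAt.mpr fun t => (hasDerivAt_exp_smul_const' a t).continuousAt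

variable {a : R} {ω : ℝ}

theorem integrableOn_Ioi_exp_smul_of_isBigO (hω : ω < 0)
    (hO : (fun t : ℝ => NormedSpace.exp (t • a)) =O[atTop] fun t => Real.exp (ω * t)) :
    IntegrableOn (fun t : ℝ => NormedSpace.exp (t • a)) (Ioi 0) :=
  (integrable_norm_iff (continuous_exp_smul a).aestronglyMeasurable).mp <|
    integrable_of_isBigO_exp_neg (neg_pos.mpr hω) (continuous_exp_smul a).norm.continuousOn
      (by simpa using hO.norm_left)

theorem mul_integral_Ioi_exp_smul_of_isBigO (hω : ω < 0)
    (hO : (fun t : ℝ => NormedSpace.exp (t • a)) =O[atTop] fun t => Real.exp (ω * t)) :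
    a * ∫ t in Ioi (0 : ℝ), NormedSpace.exp (t • a) = -1 := by
  have hint := integrableOn_Ioi_exp_smul_of_isBigO hω hO
  have hlim : Tendsto (fun t : ℝ => NormedSpace.exp (t • a)) atTop (𝓝 0) :=
    hO.trans_tendsto (Real.tendsto_exp_atBot.comp (tendsto_id.const_mul_atTop_of_neg hω))
  rw [← integral_const_mul_of_integrable hint,
    integral_Ioi_of_hasDerivAt_of_tendsto' (fun t _ => hasDerivAt_exp_smul_const' a t)
      (hint.const_mul a) hlim]
  simp

end RealAlgebra

end BanachAlgebra

namespace Matrix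

variable {m n 𝕜 : Type*} [Fintype m] [Fintype n]

theorem linfty_opNorm_le_sum_norm_col [NormedRing 𝕜] (X : Matrix m n 𝕜) :
    ‖X‖ ≤ ∑ j, ‖X.col j‖ := by
  have h : ‖X‖₊ ≤ ∑ j, ‖X.col j‖₊ := by
    rw [linfty_opNNNorm_def]
    exact Finset.sup_le fun i _ => Finset.sum_le_sum fun j _ => nnnorm_le_pi_nnnorm (X.col j) i
  simpa only [NNReal.coe_sum, coe_nnnorm] using NNReal.coe_le_coe.mpr h

theorem isBigO_of_forall_isBigO_mulVec [DecidableEq n] [NormedRing 𝕜] {α E : Type*} [Norm E]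
    {l : Filter α} {F : α → Matrix m n 𝕜} {g : α → E}
    (h : ∀ v, (fun a => F a *ᵥ v) =O[l] g) : F =O[l] g := by
  have hcols : (fun a => ∑ j, ‖(F a).col j‖) =O[l] g := IsBigO.fun_sum fun j _ => by
    simpa only [mulVec_single_one] using (h (Pi.single j 1)).norm_left
  refine (isBigO_of_le l fun a => ?_).trans hcols
  exact (linfty_opNorm_le_sum_norm_col _).trans (le_abs_self _)

theorem exp_mulVec_eq_sum_of_pow_mulVec_eq_zero [DecidableEq m] [RCLike 𝕜] {X : Matrix m m 𝕜}
    {v : m → 𝕜} {k : ℕ} (hv : X ^ k *ᵥ v = 0) :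
    NormedSpace.exp X *ᵥ v = ∑ i ∈ Finset.range k, (i ! : 𝕜)⁻¹ • (X ^ i *ᵥ v) := by
  have hseries : HasSum (fun i => (i ! : 𝕜)⁻¹ • (X ^ i *ᵥ v)) (NormedSpace.exp X *ᵥ v) := by
    convert (NormedSpace.exp_series_hasSum_exp' (𝕂 := 𝕜) X).map
        (mulVec.addMonoidHomLeft v) (continuous_id.matrix_mulVec continuous_const) using 1
    · ext i : 1
      exact (smul_mulVec _ _ _).symm
    · rfl
  refine hseries.unique (hasSum_sum_of_ne_finset_zero fun i hi => ?_)
  obtain ⟨j, rfl⟩ : ∃ j, i = j + k := ⟨i - k, by simp at hi; omega⟩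
  rw [pow_add, ← mulVec_mulVec, hv, mulVec_zero, smul_zero]

theorem isBigO_exp_smul_mulVec_of_pow_mulVec_eq_zero [DecidableEq m] {B : Matrix m m ℂ} {μ : ℂ}
    {v : m → ℂ} {k : ℕ} (hv : (B - μ • 1) ^ k *ᵥ v = 0) {ω : ℝ} (hω : μ.re < ω) :
    (fun t : ℝ => NormedSpace.exp (t • B) *ᵥ v) =O[atTop] fun t => Real.exp (ω * t) := by
  set N := B - μ • 1 with hN
  have hexpand : (fun t : ℝ => NormedSpace.exp (t • B) *ᵥ v) = fun t : ℝ =>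
      Complex.exp (μ * t) • ∑ i ∈ Finset.range k, (i ! : ℂ)⁻¹ • (t ^ i • (N ^ i *ᵥ v)) := by
    funext t
    have htN : (t • N) ^ k *ᵥ v = 0 := by rw [smul_pow, smul_mulVec, hv, smul_zero]
    have hB : t • B = t • N + (μ * t) • 1 := by
      rw [hN, ← algebraMap_smul ℂ t B, ← algebraMap_smul ℂ t (B - μ • 1), Complex.coe_algebraMap]
      module
    have hshift : NormedSpace.exp (t • N + (μ * t) • 1) =
        Complex.exp (μ * t) • NormedSpace.exp (t • N) := exp_add_smul_one _ _
    rw [hB, hshift, smul_mulVec, exp_mulVec_eq_sum_of_pow_mulVec_eq_zero htN]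
    simp_rw [smul_pow, smul_mulVec]
  have hδ : 0 < ω - μ.re := sub_pos.mpr hω
  have hsum : (fun t : ℝ => ∑ i ∈ Finset.range k, (i ! : ℂ)⁻¹ • (t ^ i • (N ^ i *ᵥ v)))
      =O[atTop] fun t => Real.exp ((ω - μ.re) * t) := by
    refine IsBigO.fun_sum fun i _ => (IsBigO.const_smul_self _).trans ?_
    refine IsBigO.trans ?_ (isLittleO_pow_exp_pos_mul_atTop i hδ).isBigO
    exact isBigO_of_le' _ fun t => (norm_smul _ _).trans_le (by rw [mul_comm])
  have hexp : (fun t : ℝ => Complex.exp (μ * t)) =O[atTop] fun t => Real.exp (μ.re * t) :=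
    isBigO_of_le _ fun t => by simp [Complex.norm_exp]
  rw [hexpand]
  refine (hexp.smul hsum).congr_right fun t => ?_
  rw [smul_eq_mul, ← Real.exp_add]
  ring_nf

theorem isBigO_exp_smul_of_forall_re_lt [DecidableEq m] (B : Matrix m m ℂ) {ω : ℝ}
    (hω : ∀ μ ∈ spectrum ℂ B, μ.re < ω) :
    (fun t : ℝ => NormedSpace.exp (t • B)) =O[atTop] fun t => Real.exp (ω * t) := by
  refine isBigO_of_forall_isBigO_mulVec fun v => ?_
  have hv : v ∈ ⨆ μ, Module.End.maxGenEigenspace (toLinAlgEquiv' B) μ := by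
    rw [Module.End.iSup_maxGenEigenspace_eq_top]; trivial
  induction hv using Submodule.iSup_induction' with
  | mem μ v hv =>
    obtain ⟨k, hk⟩ := (Module.End.mem_maxGenEigenspace _ _ _).mp hv
    have hmap : toLinAlgEquiv' ((B - μ • 1) ^ k) = (toLinAlgEquiv' B - μ • 1) ^ k := by simp
    rw [← hmap, toLinAlgEquiv'_apply] at hk
    by_cases hμ : μ ∈ spectrum ℂ B
    · exact isBigO_exp_smul_mulVec_of_pow_mulVec_eq_zero hk (hω μ hμ)
    · have hunit : IsUnit ((B - μ • 1) ^ k) := by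
        rw [spectrum.notMem_iff, Algebra.algebraMap_eq_smul_one, ← IsUnit.neg_iff, neg_sub] at hμ
        exact hμ.pow k
      obtain rfl : v = 0 := mulVec_injective_iff_isUnit.mpr hunit (by rw [hk, mulVec_zero])
      simpa only [mulVec_zero] using isBigO_zero _ _
  | zero => simpa only [mulVec_zero] using isBigO_zero _ _
  | add v w _ _ hv hw => simpa only [mulVec_add] using hv.add hw

end Matrix

/-- If every eigenvalue `λ` of the `n×n` complex matrix `A` satisfies `Re λ < Re s`, then
`t ↦ e^{-st} exp(tA)` is integrable on `[0,∞)`, the matrix `sI - A` is invertible, and the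
one-sided Laplace transform of the matrix exponential is the resolvent:
`∫₀^∞ e^{-st} exp(tA) dt = (sI - A)⁻¹`. -/
theorem laplace_matrix_exp_eq_resolvent (n : ℕ) (A : Matrix (Fin n) (Fin n) ℂ) (s : ℂ)
    (hspec : ∀ μ ∈ spectrum ℂ A, μ.re < s.re) :
    @IntegrableOn ℝ _ _ PseudoMetricSpace.toUniformSpace.toTopologicalSpace _
      (fun t : ℝ => Complex.exp (-s * t) • NormedSpace.exp (t • A)) (Ioi 0) volume ∧
    IsUnit (s • (1 : Matrix (Fin n) (Fin n) ℂ) - A) ∧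
    (∫ t in Ioi (0 : ℝ), Complex.exp (-s * t) • NormedSpace.exp (t • A))
      = (s • (1 : Matrix (Fin n) (Fin n) ℂ) - A)⁻¹ := by
  set B := A - s • (1 : Matrix (Fin n) (Fin n) ℂ)
  -- The `exp` of the statement is formed with the product topology on matrices, which agrees with
  -- the norm topology only after unfolding: Banach-algebra lemmas are applied by `exact`, not `rw`.
  have hshift (t : ℝ) :
      Complex.exp (-s * t) • NormedSpace.exp (t • A) = NormedSpace.exp (t • B) := by
    have hB : t • B = t • A + (-s * t) • 1 := by
      rw [← algebraMap_smul ℂ t B, ← algebraMap_smul ℂ t A, Complex.coe_algebraMap]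
      module
    rw [hB]
    exact (exp_add_smul_one _ _).symm
  have hspecB : ∀ μ ∈ spectrum ℂ B, μ.re < 0 := fun μ hμ => by
    simpa using hspec (μ + s) (spectrum.add_mem_iff.mpr (by
      rwa [Algebra.algebraMap_eq_smul_one, neg_add_eq_sub]))
  obtain ⟨ω, hωB, hω⟩ : ∃ ω : ℝ, (∀ μ ∈ spectrum ℂ B, μ.re < ω) ∧ ω < 0 :=
    ((B.finite_spectrum.eventually_all.mpr fun μ hμ => eventually_gt_nhds (hspecB μ hμ))
      |>.filter_mono nhdsWithin_le_nhds |>.and self_mem_nhdsWithin).exists (f := 𝓝[<] 0)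
  have hO := B.isBigO_exp_smul_of_forall_re_lt hωB
  have hresolvent : B * ∫ t in Ioi (0 : ℝ), NormedSpace.exp (t • B) = -1 :=
    mul_integral_Ioi_exp_smul_of_isBigO hω hO
  have hinv : (s • 1 - A) * ∫ t in Ioi (0 : ℝ), NormedSpace.exp (t • B) = 1 := by
    rw [show s • 1 - A = -B from (neg_sub _ _).symm, neg_mul, hresolvent, neg_neg]
  simp_rw [hshift]
  exact ⟨integrableOn_Ioi_exp_smul_of_isBigO hω hO, IsUnit.of_mul_eq_one _ hinv,
    (inv_eq_right_inv hinv).symm⟩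
end

section
/- Let κ > 0 and ω_c ∈ ℝ, and let ξ : ℝ → ℂ be integrable. Define the output pulse shape η : ℝ → ℂ by η(t) = ξ(t) - κ ∫_{-∞}^t e^{-(iω_c + κ/2)(t-r)} ξ(r) dr. Then η is integrable and its Fourier transform satisfies η̂(ω) = ((i(ω + ω_c) - κ/2) / (i(ω + ω_c) + κ/2)) · ξ̂(ω) for every real ω. -/
/-!
With `c = iω_c + κ/2`, the integral term is the convolution of `ξ` with the one-sided exponential
`g(s) = 1_{s>0} e^{-cs}`, whose Fourier transform at angular frequency `ω` is `1/(c + iω)`.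
By the convolution theorem, `η = ξ - κ (ξ ⋆ g)` has transform `(1 - κ/(c + iω)) ξ̂`, and
`1 - κ/(c + iω) = (i(ω+ω_c) - κ/2)/(i(ω+ω_c) + κ/2)`. Since `𝓕` has kernel `e^{-2πixw}`, the
transform at angular frequency `ω` is `𝓕` at `w = ω/2π`.
-/

open MeasureTheory Set Complex Real FourierTransform Convolution ContinuousLinearMap

noncomputable def oneSidedExp (c : ℂ) : ℝ → ℂ :=
  (Ioi 0).indicator fun s => cexp (-c * s)

section OneSidedExp

variable {c : ℂ}

theorem integrable_oneSidedExp (hc : 0 < c.re) : Integrable (oneSidedExp c) :=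
  (integrable_indicator_iff measurableSet_Ioi).2 <|
    integrableOn_exp_mul_complex_Ioi (a := -c) (by simpa using hc) 0

theorem fourier_oneSidedExp (hc : 0 < c.re) (w : ℝ) :
    𝓕 (oneSidedExp c) w = (c + 2 * π * w * I)⁻¹ := by
  have hre : (-(c + 2 * π * w * I)).re < 0 := by simpa using hc
  calc 𝓕 (oneSidedExp c) w
      = ∫ v in Ioi (0:ℝ), cexp (-(c + 2 * π * w * I) * v) := by
        rw [fourier_real_eq_integral_exp_smul, ← integral_indicator measurableSet_Ioi]
        congr 1 with v
        by_cases hv : 0 < v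
        · simp only [oneSidedExp, indicator_of_mem (mem_Ioi.2 hv), smul_eq_mul, ← Complex.exp_add]
          push_cast; ring_nf
        · simp [oneSidedExp, hv]
    _ = _ := by
        rw [integral_exp_mul_complex_Ioi hre, ofReal_zero, mul_zero, Complex.exp_zero, neg_div,
          div_neg, neg_neg, one_div]

theorem integral_Iic_cexp_mul_eq_convolution (f : ℝ → ℂ) (t : ℝ) :
    ∫ r in Iic t, cexp (-c * (t - r)) * f r = (f ⋆[mul ℂ ℂ] oneSidedExp c) t := by
  rw [convolution_def, integral_Iic_eq_integral_Iio, ← integral_indicator measurableSet_Iio]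
  congr 1 with r
  by_cases h : r < t
  · have h' : (0:ℝ) < t - r := sub_pos.2 h
    simp [oneSidedExp, h, h', mul_comm]
  · have h' : ¬ (0:ℝ) < t - r := by simpa using h
    simp [oneSidedExp, h, h']

end OneSidedExp

theorem integral_cexp_mul_eq_fourier (f : ℝ → ℂ) (ω : ℝ) :
    ∫ t : ℝ, cexp (-(I * ω * t)) * f t = 𝓕 f (ω / (2 * π)) := by
  rw [fourier_real_eq_integral_exp_smul]
  congr 1 with t
  rw [smul_eq_mul]
  congr 2
  push_cast
  field_simp

theorem Real.fourier_sub_const_smul {E : Type*} [NormedAddCommGroup E] [NormedSpace ℂ E]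
    {V : Type*} [NormedAddCommGroup V] [InnerProductSpace ℝ V] [MeasurableSpace V]
    [BorelSpace V] [FiniteDimensional ℝ V] {f g : V → E}
    (hf : Integrable f) (hg : Integrable g) (a : ℂ) (w : V) :
    𝓕 (f - a • g) w = 𝓕 f w - a • 𝓕 g w := by
  simp only [fourier_eq, Pi.sub_apply, Pi.smul_apply, smul_sub, smul_comm _ a]
  rw [← integral_smul]
  exact integral_sub ((fourierIntegral_convergent_iff w).2 hf)
    (((fourierIntegral_convergent_iff w).2 hg).smul a)

/-- Response of an optical cavity (detuning `ω_c`, half linewidth `κ > 0`) to an integrable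
input pulse shape `ξ`: the output pulse shape
`η(t) = ξ(t) - κ ∫_{-∞}^t e^{-(iω_c + κ/2)(t-r)} ξ(r) dr` is integrable and its Fourier
transform (convention `(2π)^{-1/2} ∫ e^{-iωt}·dt`) satisfies
`η̂(ω) = ((i(ω+ω_c) - κ/2)/(i(ω+ω_c) + κ/2)) ξ̂(ω)`. -/
theorem cavity_output_pulse_fourier (κ ωc : ℝ) (hκ : 0 < κ) (ξ : ℝ → ℂ)
    (hξ : Integrable ξ) (η : ℝ → ℂ)
    (hη : ∀ t : ℝ, η t = ξ t - (κ : ℂ) * ∫ r in Iic t,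
        Complex.exp (-(Complex.I * ωc + (κ : ℂ)/2) * ((t : ℂ) - r)) * ξ r) :
    Integrable η ∧
    ∀ ω : ℝ,
      (1 / (Real.sqrt (2 * Real.pi)) : ℂ) * ∫ t : ℝ, Complex.exp (-(Complex.I * ω * t)) * η t
        = ((Complex.I * ((ω : ℂ) + ωc) - (κ : ℂ)/2) / (Complex.I * ((ω : ℂ) + ωc) + (κ : ℂ)/2)) *
          ((1 / (Real.sqrt (2 * Real.pi)) : ℂ) *
            ∫ t : ℝ, Complex.exp (-(Complex.I * ω * t)) * ξ t) := by
  set c : ℂ := I * ωc + κ / 2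
  have hc : 0 < c.re := by simpa [c] using hκ
  have hg := integrable_oneSidedExp hc
  have hconv := hξ.integrable_convolution (mul ℂ ℂ) hg
  have hη' : η = ξ - (κ : ℂ) • (ξ ⋆[mul ℂ ℂ] oneSidedExp c) := by
    ext t
    rw [hη, integral_Iic_cexp_mul_eq_convolution]
    rfl
  refine ⟨hη' ▸ hξ.sub (hconv.smul _), fun ω => ?_⟩
  have hden : c + ω * I ≠ 0 := fun h => by
    have := congrArg re h
    simp [c] at this
    linarith
  have hω : (2 * π * ↑(ω / (2 * π)) : ℂ) = ω := by
    push_cast; field_simp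
  have hratio : 1 - κ * (c + ω * I)⁻¹ =
      (I * ((ω : ℂ) + ωc) - κ / 2) / (I * ((ω : ℂ) + ωc) + κ / 2) := by
    rw [show I * ((ω : ℂ) + ωc) + κ / 2 = c + ω * I by ring]
    field_simp
    ring
  rw [integral_cexp_mul_eq_fourier, integral_cexp_mul_eq_fourier, hη',
    Real.fourier_sub_const_smul hξ hconv, fourier_mul_convolution_eq hξ hg,
    fourier_oneSidedExp hc, hω, ← hratio, smul_eq_mul]
  ring
end

section
/- Let κ > 0, ω_c ∈ ℝ, γ ∈ [0,1), and ω ∈ ℝ. Let Ξ = (i(ω + ω_c) - κ/2) / (i(ω + ω_c) + κ/2) be the cavity transfer function on the imaginary axis and set Δ = ω + ω_c and a = (1 - √γ)/(1 + √γ). Then 1 - √γ · Ξ ≠ 0, a·Δ·i + κ/2 ≠ 0, and the closed-loop gain satisfies (√γ - Ξ) / (1 - √γ · Ξ) = (-a·Δ·i + κ/2) / (a·Δ·i + κ/2). Consequently, the coherent feedback network of an optical cavity and a beamsplitter with parameter γ, driven by a single photon of pulse shape ξ, produces an output photon with frequency-domain pulse shape η₃[iω] = ((-a(ω+ω_c)i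 + κ/2) / (a(ω+ω_c)i + κ/2)) · ξ[iω]. -/
/-- Closed-loop gain of the coherent feedback network formed by an optical cavity
(detuning `ω_c`, half linewidth `κ > 0`, transfer function
`Ξ = (i(ω+ω_c) - κ/2)/(i(ω+ω_c) + κ/2)`) and a beamsplitter with parameter `γ ∈ [0,1)`:
with `Δ = ω + ω_c` and `a = (1-√γ)/(1+√γ)`, we have `1 - √γ·Ξ ≠ 0`, `aΔi + κ/2 ≠ 0` and
`(√γ - Ξ)/(1 - √γ·Ξ) = (-aΔi + κ/2)/(aΔi + κ/2)`; consequently the output photon pulse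
shape is `η₃[iω] = ((-a(ω+ω_c)i + κ/2)/(a(ω+ω_c)i + κ/2))·ξ[iω]`. -/
theorem cavity_feedback_closed_loop_gain (κ ωc : ℝ) (hκ : 0 < κ)
    (γ : ℝ) (hγ0 : 0 ≤ γ) (hγ1 : γ < 1) (ω : ℝ)
    (Ξ : ℂ)
    (hΞ : Ξ = (Complex.I * ((ω : ℂ) + ωc) - (κ : ℂ)/2) / (Complex.I * ((ω : ℂ) + ωc) + (κ : ℂ)/2))
    (Δ a : ℝ) (hΔ : Δ = ω + ωc) (ha : a = (1 - Real.sqrt γ) / (1 + Real.sqrt γ)) :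
    1 - (Real.sqrt γ : ℂ) * Ξ ≠ 0 ∧
    (a : ℂ) * Δ * Complex.I + (κ : ℂ)/2 ≠ 0 ∧
    ((Real.sqrt γ : ℂ) - Ξ) / (1 - (Real.sqrt γ : ℂ) * Ξ)
      = (-((a : ℂ) * Δ * Complex.I) + (κ : ℂ)/2) / ((a : ℂ) * Δ * Complex.I + (κ : ℂ)/2) ∧
    ∀ ξω : ℂ,
      (((Real.sqrt γ : ℂ) - Ξ) / (1 - (Real.sqrt γ : ℂ) * Ξ)) * ξω
        = ((-((a : ℂ) * ((ω : ℂ) + ωc) * Complex.I) + (κ : ℂ)/2) /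
            ((a : ℂ) * ((ω : ℂ) + ωc) * Complex.I + (κ : ℂ)/2)) * ξω := by
  set s : ℝ := Real.sqrt γ with hs
  have hs0 : 0 ≤ s := Real.sqrt_nonneg γ
  have hs1 : s < 1 := by
    rw [hs, show (1:ℝ) = Real.sqrt 1 by simp]
    exact Real.sqrt_lt_sqrt hγ0 hγ1
  have hsp : (0:ℝ) < 1 + s := by linarith
  have hspne : ((1:ℂ) + s) ≠ 0 := by
    intro h
    have := congrArg Complex.re h
    simp at this
    linarith
  have hD : Complex.I * ((ω : ℂ) + ωc) + (κ : ℂ)/2 ≠ 0 := by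
    intro h
    have := congrArg Complex.re h
    simp [Complex.add_re, Complex.div_re] at this
    linarith
  have hΞD : Ξ * (Complex.I * ((ω : ℂ) + ωc) + (κ : ℂ)/2)
      = Complex.I * ((ω : ℂ) + ωc) - (κ : ℂ)/2 := by
    rw [hΞ, div_mul_cancel₀ _ hD]
  have hQ : (1 - (s:ℂ) * Ξ) * (Complex.I * ((ω : ℂ) + ωc) + (κ : ℂ)/2)
      = ((1:ℂ) - s) * ((ω:ℂ)+ωc) * Complex.I + ((1:ℂ) + s) * ((κ:ℂ)/2) := by
    linear_combination (-(s:ℂ)) * hΞD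
  have hP : ((s:ℂ) - Ξ) * (Complex.I * ((ω : ℂ) + ωc) + (κ : ℂ)/2)
      = -(((1:ℂ) - s) * ((ω:ℂ)+ωc) * Complex.I) + ((1:ℂ) + s) * ((κ:ℂ)/2) := by
    linear_combination -hΞD
  have hQne : ((1:ℂ) - s) * ((ω:ℂ)+ωc) * Complex.I + ((1:ℂ) + s) * ((κ:ℂ)/2) ≠ 0 := by
    intro h
    have h' := congrArg Complex.re h
    simp [Complex.add_re, Complex.mul_re, Complex.sub_re] at h'
    rcases h' with h' | h' <;> linarith
  have h1 : 1 - (s:ℂ) * Ξ ≠ 0 := by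
    intro h
    rw [h, zero_mul] at hQ
    exact hQne hQ.symm
  have hac : (a : ℂ) = ((1:ℂ) - s) / ((1:ℂ) + s) := by
    rw [ha]
    push_cast
    ring
  have h2 : (a : ℂ) * Δ * Complex.I + (κ : ℂ)/2 ≠ 0 := by
    intro h
    have h' := congrArg Complex.re h
    simp [Complex.add_re, Complex.mul_re] at h'
    linarith
  have hmain : ((s:ℂ) - Ξ) / (1 - (s:ℂ) * Ξ)
      = (-((a : ℂ) * Δ * Complex.I) + (κ : ℂ)/2) / ((a : ℂ) * Δ * Complex.I + (κ : ℂ)/2) := by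
    have hABP : ((s:ℂ) - Ξ) / (1 - (s:ℂ) * Ξ)
        = (-(((1:ℂ) - s) * ((ω:ℂ)+ωc) * Complex.I) + ((1:ℂ) + s) * ((κ:ℂ)/2))
          / (((1:ℂ) - s) * ((ω:ℂ)+ωc) * Complex.I + ((1:ℂ) + s) * ((κ:ℂ)/2)) := by
      rw [← hP, ← hQ, mul_div_mul_right _ _ hD]
    rw [hABP, div_eq_div_iff hQne h2, hac, hΔ]
    push_cast
    field_simp
  refine ⟨h1, h2, hmain, ?_⟩
  intro ξω
  rw [hmain, hΔ]
  push_cast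
  ring
end

section
/- Fix n ≥ 1, let H be a Hermitian n×n complex matrix and L an n×n complex matrix, and define the Liouvillian 𝓛*ρ = -i(Hρ - ρH) + LρL† - (1/2)(L†Lρ + ρL†L). Let ξ : ℝ → ℂ be continuous, and let ϱ₁₁, ϱ₁₀, ϱ₀₀ : ℝ → M_n(ℂ) be differentiable functions satisfying the single-photon master equation (with S = I): ϱ₁₁'(t) = 𝓛*ϱ₁₁(t) + (ϱ₁₀(t)†L† - L†ϱ₁₀(t)†)ξ(t) + (Lϱ₁₀(t) - ϱ₁₀(t)L)ξ(t)*, ϱ₁₀'(t) = 𝓛*ϱ₁₀(t) + (ϱ₀₀(t)L† - L†ϱ₀₀(t))ξ(t), ϱ₀₀'(t) = 𝓛*ϱ₀₀(t), with initial conditions at time t₀ such that ϱ₀₀(t₀) and ϱ₁₁(t₀) are Hermitian. Then ϱ₀₀(t) and ϱ₁₁(t) are Hermitian for every t ≥ t₀. -/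
open Matrix

attribute [local instance] Matrix.normedAddCommGroup Matrix.normedSpace

/-!
For Hermitian `H` the Liouvillian commutes with the conjugate transpose, and the forcing term
`ξ [ϱ₁₀†, L†] + ξ* [L, ϱ₁₀]` of the `ϱ₁₁` equation is Hermitian, being `B† + B` for
`B = ξ* [L, ϱ₁₀]`. Hence `ϱ₀₀†` and `ϱ₁₁†` solve the same linear ODEs as `ϱ₀₀` and `ϱ₁₁`, with the
same initial values, and uniqueness of solutions of Lipschitz ODEs gives `ϱ† = ϱ` at all times.
-/

theorem IsSelfAdjoint.of_hasDerivAt_of_map_star {E : Type*} [NormedAddCommGroup E]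
    [NormedSpace ℝ E] [StarAddMonoid E] [StarModule ℝ E] [ContinuousStar E]
    {A : E → E} {K : NNReal} (hA : LipschitzWith K A) (hA_star : ∀ x, A (star x) = star (A x))
    {F : ℝ → E} (hF : ∀ t, IsSelfAdjoint (F t)) {f : ℝ → E}
    (hf : ∀ t, HasDerivAt f (A (f t) + F t) t) {t₀ : ℝ} (h₀ : IsSelfAdjoint (f t₀)) (t : ℝ) :
    IsSelfAdjoint (f t) := by
  have hf_star (t : ℝ) : HasDerivAt (fun s ↦ star (f s)) (A (star (f t)) + F t) t := by
    simpa only [star_add, hA_star, (hF t).star_eq] using (hf t).star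
  have hv (t : ℝ) : LipschitzOnWith (K + 0) (fun x ↦ A x + F t) Set.univ :=
    (hA.add (LipschitzWith.const (F t))).lipschitzOnWith
  have h_eq := ODE_solution_unique_univ hv (fun t ↦ ⟨hf_star t, trivial⟩)
    (fun t ↦ ⟨hf t, trivial⟩) h₀
  exact congrFun h_eq t

theorem Matrix.isHermitian_smul_conjTranspose_add_star_smul {m α : Type*} [CommRing α]
    [StarRing α] (z : α) (B : Matrix m m α) : (z • Bᴴ + star z • B).IsHermitian := by
  simp [IsHermitian, add_comm]

section Liouvillian

variable {m : Type*} [Fintype m] [DecidableEq m]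

noncomputable def liouvillian (H L : Matrix m m ℂ) : Matrix m m ℂ →ₗ[ℂ] Matrix m m ℂ :=
  -Complex.I • (LinearMap.mulLeft ℂ H - LinearMap.mulRight ℂ H)
    + LinearMap.mulLeft ℂ L ∘ₗ LinearMap.mulRight ℂ Lᴴ
    - ((1 : ℂ) / 2) • (LinearMap.mulLeft ℂ (Lᴴ * L) + LinearMap.mulRight ℂ (Lᴴ * L))

theorem liouvillian_apply (H L ρ : Matrix m m ℂ) :
    liouvillian H L ρ = -Complex.I • (H * ρ - ρ * H) + L * ρ * Lᴴ
        - ((1 : ℂ) / 2) • (Lᴴ * L * ρ + ρ * (Lᴴ * L)) := by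
  simp [liouvillian, Matrix.mul_assoc]

theorem conjTranspose_liouvillian {H : Matrix m m ℂ} (hH : H.IsHermitian) (L ρ : Matrix m m ℂ) :
    (liouvillian H L ρ)ᴴ = liouvillian H L ρᴴ := by
  simp only [liouvillian_apply, conjTranspose_add, conjTranspose_sub, conjTranspose_smul,
    conjTranspose_mul, conjTranspose_conjTranspose, hH.eq, star_neg, Complex.star_def,
    Complex.conj_I, map_div₀, map_one, map_ofNat, Matrix.mul_assoc]
  module

theorem Matrix.IsHermitian.of_hasDerivAt_liouvillian {H : Matrix m m ℂ} (hH : H.IsHermitian)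
    (L : Matrix m m ℂ) {F : ℝ → Matrix m m ℂ} (hF : ∀ t, (F t).IsHermitian)
    {ϱ : ℝ → Matrix m m ℂ} (hϱ : ∀ t, HasDerivAt ϱ (liouvillian H L (ϱ t) + F t) t) {t₀ : ℝ}
    (h₀ : (ϱ t₀).IsHermitian) (t : ℝ) : (ϱ t).IsHermitian :=
  IsSelfAdjoint.of_hasDerivAt_of_map_star
    (LinearMap.toContinuousLinearMap (liouvillian H L)).lipschitz
    (fun ρ ↦ (conjTranspose_liouvillian hH L ρ).symm) hF hϱ h₀ t

end Liouvillian

theorem single_photon_master_equation_hermiticity_preserving_general (n : ℕ)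
    (H L : Matrix (Fin n) (Fin n) ℂ) (hH : Hᴴ = H)
    (𝓛 : Matrix (Fin n) (Fin n) ℂ → Matrix (Fin n) (Fin n) ℂ)
    (h𝓛 : ∀ ρ : Matrix (Fin n) (Fin n) ℂ,
      𝓛 ρ = -Complex.I • (H * ρ - ρ * H) + L * ρ * Lᴴ
        - ((1 : ℂ)/2) • (Lᴴ * L * ρ + ρ * (Lᴴ * L)))
    (ξ : ℝ → ℂ)
    (ϱ11 ϱ10 ϱ00 : ℝ → Matrix (Fin n) (Fin n) ℂ)
    (h11 : ∀ t : ℝ, HasDerivAt ϱ11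
      (𝓛 (ϱ11 t) + ξ t • ((ϱ10 t)ᴴ * Lᴴ - Lᴴ * (ϱ10 t)ᴴ)
        + (starRingEnd ℂ) (ξ t) • (L * ϱ10 t - ϱ10 t * L)) t)
    (h00 : ∀ t : ℝ, HasDerivAt ϱ00 (𝓛 (ϱ00 t)) t)
    (t₀ : ℝ) (h00init : (ϱ00 t₀)ᴴ = ϱ00 t₀) (h11init : (ϱ11 t₀)ᴴ = ϱ11 t₀) :
    ∀ t : ℝ, t₀ ≤ t → (ϱ00 t)ᴴ = ϱ00 t ∧ (ϱ11 t)ᴴ = ϱ11 t := by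
  have h𝓛_eq : 𝓛 = liouvillian H L :=
    funext fun ρ ↦ (h𝓛 ρ).trans (liouvillian_apply H L ρ).symm
  subst h𝓛_eq
  set B : ℝ → Matrix (Fin n) (Fin n) ℂ := fun s ↦ L * ϱ10 s - ϱ10 s * L
  have h00' (s : ℝ) : HasDerivAt ϱ00 (liouvillian H L (ϱ00 s) + 0) s := by
    simpa only [add_zero] using h00 s
  have h11' (s : ℝ) :
      HasDerivAt ϱ11 (liouvillian H L (ϱ11 s) + (ξ s • (B s)ᴴ + star (ξ s) • B s)) s := by
    simpa only [B, conjTranspose_sub, conjTranspose_mul, starRingEnd_apply, add_assoc]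
      using h11 s
  intro t _
  exact ⟨IsHermitian.of_hasDerivAt_liouvillian hH L (fun _ ↦ isHermitian_zero) h00' h00init t,
    IsHermitian.of_hasDerivAt_liouvillian hH L
      (fun s ↦ isHermitian_smul_conjTranspose_add_star_smul (ξ s) (B s)) h11' h11init t⟩

/-- Hermiticity preservation for the single-photon master equation (with `S = I`, Hermitian
Hamiltonian `H`): if `ϱ₁₁, ϱ₁₀, ϱ₀₀` solve `ϱ₁₁' = 𝓛*ϱ₁₁ + [ϱ₁₀†, L†]ξ + [L, ϱ₁₀]ξ*`,
`ϱ₁₀' = 𝓛*ϱ₁₀ + [ϱ₀₀, L†]ξ`, `ϱ₀₀' = 𝓛*ϱ₀₀`, where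
`𝓛*ρ = -i(Hρ - ρH) + LρL† - (1/2)(L†Lρ + ρL†L)`, and `ϱ₀₀(t₀)` and `ϱ₁₁(t₀)` are Hermitian,
then `ϱ₀₀(t)` and `ϱ₁₁(t)` are Hermitian for all `t ≥ t₀`. -/
theorem single_photon_master_equation_hermiticity_preserving (n : ℕ) (hn : 1 ≤ n)
    (H L : Matrix (Fin n) (Fin n) ℂ) (hH : Hᴴ = H)
    (𝓛 : Matrix (Fin n) (Fin n) ℂ → Matrix (Fin n) (Fin n) ℂ)
    (h𝓛 : ∀ ρ : Matrix (Fin n) (Fin n) ℂ,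
      𝓛 ρ = -Complex.I • (H * ρ - ρ * H) + L * ρ * Lᴴ
        - ((1 : ℂ)/2) • (Lᴴ * L * ρ + ρ * (Lᴴ * L)))
    (ξ : ℝ → ℂ) (hξ : Continuous ξ)
    (ϱ11 ϱ10 ϱ00 : ℝ → Matrix (Fin n) (Fin n) ℂ)
    (h11 : ∀ t : ℝ, HasDerivAt ϱ11
      (𝓛 (ϱ11 t) + ξ t • ((ϱ10 t)ᴴ * Lᴴ - Lᴴ * (ϱ10 t)ᴴ)
        + (starRingEnd ℂ) (ξ t) • (L * ϱ10 t - ϱ10 t * L)) t)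
    (h10 : ∀ t : ℝ, HasDerivAt ϱ10
      (𝓛 (ϱ10 t) + ξ t • (ϱ00 t * Lᴴ - Lᴴ * ϱ00 t)) t)
    (h00 : ∀ t : ℝ, HasDerivAt ϱ00 (𝓛 (ϱ00 t)) t)
    (t₀ : ℝ) (h00init : (ϱ00 t₀)ᴴ = ϱ00 t₀) (h11init : (ϱ11 t₀)ᴴ = ϱ11 t₀) :
    ∀ t : ℝ, t₀ ≤ t → (ϱ00 t)ᴴ = ϱ00 t ∧ (ϱ11 t)ᴴ = ϱ11 t :=
  single_photon_master_equation_hermiticity_preserving_general n H L hH 𝓛 h𝓛 ξ ϱ11 ϱ10 ϱ00 h11 h00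
    t₀ h00init h11init
end
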